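/- arXiv:1506.02005 — 2 statements merged into one kernel-verified Lean document; each statement's English description precedes it below -/
import Mathlib

section
/- Let n, m be positive integers, let A be a 2n×2n, B a 2n×2m, and C a 2m×2n complex matrix, each of Δ-form, and let D = I_{2m}. Then the following are equivalent: (i) there exist an invertible Δ-form 2n×2n complex matrix T, a Hermitian Δ-form 2n×2n complex matrix M, and a Δ-form 2m×2n complex matrix N such that, setting Θ = T J_n T†, one has A = −iΘM − (1/2)ΘN†J_m N, B = −ΘN†J_m, and C = N; (ii) there exists an invertible Δ-form 2n×2n complex matrix T such that Θ = T J_n T† satisfies AΘ + ΘA† + B J_m B† = 0 and B = −ΘC†J_m. -/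
open Matrix

/-- The matrix `J_k = diag(I_k, -I_k)`. -/
noncomputable def Jmat (k : ℕ) : Matrix (Fin k ⊕ Fin k) (Fin k ⊕ Fin k) ℂ :=
  fromBlocks 1 0 0 (-1)

/-- A `2p × 2q` complex matrix is of Δ-form if it equals
`[[X1, X2], [X2^#, X1^#]]` for some `p × q` matrices `X1, X2`. -/
def IsDelta {p q : ℕ} (X : Matrix (Fin p ⊕ Fin p) (Fin q ⊕ Fin q) ℂ) : Prop :=
  ∃ X1 X2 : Matrix (Fin p) (Fin q) ℂ,
    X = fromBlocks X1 X2 (X2.map (starRingEnd ℂ)) (X1.map (starRingEnd ℂ))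

open ComplexConjugate

/-! The Δ-form matrices are the fixed points of the antilinear multiplicative involution
`X ↦ Σ X^# Σ`, where `Σ` swaps the two blocks; it sends `J_k` to `-J_k`, hence `Θ = T J T†`
to `-Θ` when `T` is of Δ-form. (i) ⇒ (ii) is a direct computation from `Θ† = Θ`, `M† = M` and
`J² = 1`. For (ii) ⇒ (i) take `N = C` and solve the equation for `A` as
`M = iΘ⁻¹A + (i/2)C†JC`: conjugating the Lyapunov equation by `Θ⁻¹` shows that `M` is
Hermitian, and applying the involution shows that it is of Δ-form. -/

lemma Jmat_isHermitian (k : ℕ) : (Jmat k).IsHermitian := by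
  simp [IsHermitian, Jmat, fromBlocks_conjTranspose]

lemma Jmat_mul_Jmat (k : ℕ) : Jmat k * Jmat k = 1 := by
  simp [Jmat, fromBlocks_multiply, ← fromBlocks_one]

section DeltaForm

noncomputable def swapBlocks (p : ℕ) : Matrix (Fin p ⊕ Fin p) (Fin p ⊕ Fin p) ℂ :=
  fromBlocks 0 1 1 0

lemma swapBlocks_mul_swapBlocks (p : ℕ) : swapBlocks p * swapBlocks p = 1 := by
  simp [swapBlocks, fromBlocks_multiply, ← fromBlocks_one]

lemma swapBlocks_conjTranspose (p : ℕ) : (swapBlocks p)ᴴ = swapBlocks p := by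
  simp [swapBlocks, fromBlocks_conjTranspose]

noncomputable def deltaConj {p q : ℕ} (X : Matrix (Fin p ⊕ Fin p) (Fin q ⊕ Fin q) ℂ) :
    Matrix (Fin p ⊕ Fin p) (Fin q ⊕ Fin q) ℂ :=
  swapBlocks p * X.map (starRingEnd ℂ) * swapBlocks q

lemma isDelta_iff_deltaConj_eq {p q : ℕ} (X : Matrix (Fin p ⊕ Fin p) (Fin q ⊕ Fin q) ℂ) :
    IsDelta X ↔ deltaConj X = X := by
  obtain ⟨a, b, c, d, rfl⟩ : ∃ a b c d, X = fromBlocks a b c d :=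
    ⟨_, _, _, _, (fromBlocks_toBlocks X).symm⟩
  have hconj : ∀ {r s : ℕ} (Y : Matrix (Fin r) (Fin s) ℂ),
      (Y.map (starRingEnd ℂ)).map (starRingEnd ℂ) = Y := fun Y => by ext; simp
  simp only [IsDelta, deltaConj, swapBlocks, fromBlocks_map, fromBlocks_multiply, Matrix.zero_mul,
    Matrix.one_mul, Matrix.mul_one, Matrix.mul_zero, add_zero, zero_add, fromBlocks_inj]
  constructor
  · rintro ⟨X1, X2, rfl, rfl, rfl, rfl⟩
    simp [hconj]
  · rintro ⟨rfl, rfl, -, -⟩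
    simp [hconj]

variable {p q r : ℕ}

lemma deltaConj_mul (X : Matrix (Fin p ⊕ Fin p) (Fin q ⊕ Fin q) ℂ)
    (Y : Matrix (Fin q ⊕ Fin q) (Fin r ⊕ Fin r) ℂ) :
    deltaConj (X * Y) = deltaConj X * deltaConj Y := by
  simp only [deltaConj, Matrix.map_mul, Matrix.mul_assoc]
  rw [← Matrix.mul_assoc (swapBlocks q), swapBlocks_mul_swapBlocks, Matrix.one_mul]

lemma deltaConj_add (X Y : Matrix (Fin p ⊕ Fin p) (Fin q ⊕ Fin q) ℂ) :
    deltaConj (X + Y) = deltaConj X + deltaConj Y := by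
  simp only [deltaConj, Matrix.map_add _ (map_add _), Matrix.add_mul, Matrix.mul_add]

lemma deltaConj_smul (s : ℂ) (X : Matrix (Fin p ⊕ Fin p) (Fin q ⊕ Fin q) ℂ) :
    deltaConj (s • X) = conj s • deltaConj X := by
  rw [deltaConj, deltaConj, Matrix.map_smulₛₗ _ (starRingEnd ℂ) s (map_mul _ s),
    Matrix.mul_smul, Matrix.smul_mul]

lemma deltaConj_conjTranspose (X : Matrix (Fin p ⊕ Fin p) (Fin q ⊕ Fin q) ℂ) :
    deltaConj Xᴴ = (deltaConj X)ᴴ := by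
  simp only [deltaConj, conjTranspose_mul, swapBlocks_conjTranspose, Matrix.mul_assoc,
    conjTranspose_map (starRingEnd ℂ) (fun _ => rfl)]

lemma deltaConj_one : deltaConj (1 : Matrix (Fin p ⊕ Fin p) (Fin p ⊕ Fin p) ℂ) = 1 := by
  rw [deltaConj, Matrix.map_one _ (map_zero _) (map_one _), mul_one, swapBlocks_mul_swapBlocks]

lemma deltaConj_nonsing_inv (X : Matrix (Fin p ⊕ Fin p) (Fin p ⊕ Fin p) ℂ)
    (hX : IsUnit X.det) : deltaConj X⁻¹ = (deltaConj X)⁻¹ :=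
  (inv_eq_right_inv (by rw [← deltaConj_mul, mul_nonsing_inv X hX, deltaConj_one])).symm

lemma deltaConj_Jmat (k : ℕ) : deltaConj (Jmat k) = -Jmat k := by
  have hmap : (Jmat k).map (starRingEnd ℂ) = Jmat k := by
    ext i j
    rcases i with i | i <;> rcases j with j | j <;> simp [Jmat, one_apply, apply_ite]
  rw [deltaConj, hmap]
  simp [Jmat, swapBlocks, fromBlocks_multiply, fromBlocks_neg]

lemma deltaConj_mul_Jmat_mul_conjTranspose {T : Matrix (Fin p ⊕ Fin p) (Fin q ⊕ Fin q) ℂ} (hT : IsDelta T) :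
    deltaConj (T * Jmat q * Tᴴ) = -(T * Jmat q * Tᴴ) := by
  rw [deltaConj_mul, deltaConj_mul, deltaConj_conjTranspose, deltaConj_Jmat,
    (isDelta_iff_deltaConj_eq T).mp hT, Matrix.mul_neg, Matrix.neg_mul]

end DeltaForm

section Realization

variable {ι κ : Type*} [Fintype ι] [Fintype κ]
  {Θ A : Matrix ι ι ℂ} {C : Matrix κ ι ℂ} {J : Matrix κ κ ℂ}

lemma mul_mul_conjTranspose_of_eq_neg_mul_conjTranspose_mul [DecidableEq κ] {B : Matrix ι κ ℂ}
    (hΘ : Θ.IsHermitian) (hJ : J.IsHermitian) (hJJ : J * J = 1) (hB : B = -(Θ * Cᴴ * J)) :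
    B * J * Bᴴ = Θ * Cᴴ * J * C * Θ := by
  subst hB
  simp only [conjTranspose_neg, conjTranspose_mul, conjTranspose_conjTranspose, hJ.eq, hΘ.eq,
    Matrix.neg_mul, Matrix.mul_neg, neg_neg, Matrix.mul_assoc]
  rw [← Matrix.mul_assoc J J, hJJ, Matrix.one_mul]

lemma lyapunov_of_realization [DecidableEq κ] {M : Matrix ι ι ℂ} {B : Matrix ι κ ℂ}
    (hΘ : Θ.IsHermitian) (hM : M.IsHermitian) (hJ : J.IsHermitian) (hJJ : J * J = 1)
    (hA : A = (-Complex.I) • (Θ * M) - (1 / 2 : ℂ) • (Θ * Cᴴ * J * C))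
    (hB : B = -(Θ * Cᴴ * J)) :
    A * Θ + Θ * Aᴴ + B * J * Bᴴ = 0 := by
  rw [mul_mul_conjTranspose_of_eq_neg_mul_conjTranspose_mul hΘ hJ hJJ hB, hA]
  simp only [conjTranspose_sub, conjTranspose_smul, conjTranspose_mul,
    conjTranspose_conjTranspose, hJ.eq, hΘ.eq, hM.eq, Complex.star_def, map_neg,
    Complex.conj_I, map_div₀, map_one, map_ofNat, Matrix.sub_mul, Matrix.mul_sub,
    Matrix.smul_mul, Matrix.mul_smul, Matrix.mul_assoc]
  module

variable [DecidableEq ι]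

/-- The paper's `M`, solving `A = -iΘM - ½ΘC†JC`. -/
noncomputable def hamiltonian (Θ A : Matrix ι ι ℂ) (C : Matrix κ ι ℂ) (J : Matrix κ κ ℂ) :
    Matrix ι ι ℂ :=
  Complex.I • (Θ⁻¹ * A) + (Complex.I / 2) • (Cᴴ * J * C)

lemma eq_realization_hamiltonian (hΘ : IsUnit Θ.det) :
    A = (-Complex.I) • (Θ * hamiltonian Θ A C J) - (1 / 2 : ℂ) • (Θ * Cᴴ * J * C) := by
  simp only [hamiltonian, Matrix.mul_add, Matrix.mul_smul, smul_add, smul_smul,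
    ← Matrix.mul_assoc, mul_nonsing_inv Θ hΘ, Matrix.one_mul]
  match_scalars
  · linear_combination Complex.I_mul_I
  · linear_combination (1 / 2 : ℂ) * Complex.I_mul_I

lemma isHermitian_hamiltonian [DecidableEq κ] {B : Matrix ι κ ℂ}
    (hΘ : Θ.IsHermitian) (hΘu : IsUnit Θ.det) (hJ : J.IsHermitian) (hJJ : J * J = 1)
    (hL : A * Θ + Θ * Aᴴ + B * J * Bᴴ = 0) (hB : B = -(Θ * Cᴴ * J)) :
    (hamiltonian Θ A C J).IsHermitian := by
  rw [mul_mul_conjTranspose_of_eq_neg_mul_conjTranspose_mul hΘ hJ hJJ hB] at hL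
  have hL' : Θ⁻¹ * A + Aᴴ * Θ⁻¹ + Cᴴ * J * C = 0 := by
    have h := congrArg (fun X => Θ⁻¹ * X * Θ⁻¹) hL
    simpa only [Matrix.mul_add, Matrix.add_mul, Matrix.mul_zero, Matrix.zero_mul,
      Matrix.mul_assoc, mul_nonsing_inv Θ hΘu, nonsing_inv_mul_cancel_left _ _ hΘu,
      Matrix.mul_one] using h
  have hAΘ : Aᴴ * Θ⁻¹ = -(Θ⁻¹ * A) - Cᴴ * J * C := by
    rw [← sub_eq_zero, ← hL']; abel
  simp only [IsHermitian, hamiltonian, conjTranspose_add, conjTranspose_smul, conjTranspose_mul,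
    conjTranspose_conjTranspose, conjTranspose_nonsing_inv, hΘ.eq, hJ.eq, Complex.star_def,
    Complex.conj_I, map_div₀, map_ofNat, Matrix.mul_assoc, hAΘ]
  module

end Realization

lemma isDelta_hamiltonian {p q : ℕ} {Θ A : Matrix (Fin p ⊕ Fin p) (Fin p ⊕ Fin p) ℂ}
    {C : Matrix (Fin q ⊕ Fin q) (Fin p ⊕ Fin p) ℂ}
    (hΘ : deltaConj Θ = -Θ) (hΘu : IsUnit Θ.det) (hA : IsDelta A) (hC : IsDelta C) :
    IsDelta (hamiltonian Θ A C (Jmat q)) := by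
  have hΘinv : deltaConj Θ⁻¹ = -Θ⁻¹ := by
    rw [deltaConj_nonsing_inv Θ hΘu, hΘ]
    exact inv_eq_left_inv (by rw [neg_mul_neg, nonsing_inv_mul Θ hΘu])
  rw [isDelta_iff_deltaConj_eq] at hA hC ⊢
  simp only [hamiltonian, deltaConj_add, deltaConj_smul, deltaConj_mul, deltaConj_conjTranspose,
    deltaConj_Jmat, hΘinv, hA, hC, Complex.conj_I, map_div₀, map_ofNat, Matrix.neg_mul,
    Matrix.mul_neg]
  module

theorem physically_realizable_iff_general
    (n m : ℕ)
    (A : Matrix (Fin n ⊕ Fin n) (Fin n ⊕ Fin n) ℂ)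
    (B : Matrix (Fin n ⊕ Fin n) (Fin m ⊕ Fin m) ℂ)
    (C : Matrix (Fin m ⊕ Fin m) (Fin n ⊕ Fin n) ℂ)
    (hA : IsDelta A) (hC : IsDelta C) :
    (∃ (T M : Matrix (Fin n ⊕ Fin n) (Fin n ⊕ Fin n) ℂ)
        (N : Matrix (Fin m ⊕ Fin m) (Fin n ⊕ Fin n) ℂ),
        IsDelta T ∧ IsUnit T ∧ IsDelta M ∧ M.IsHermitian ∧ IsDelta N ∧
        A = (-Complex.I) • ((T * Jmat n * Tᴴ) * M)
            - (1 / 2 : ℂ) • ((T * Jmat n * Tᴴ) * Nᴴ * Jmat m * N) ∧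
        B = -((T * Jmat n * Tᴴ) * Nᴴ * Jmat m) ∧
        C = N)
    ↔ (∃ T : Matrix (Fin n ⊕ Fin n) (Fin n ⊕ Fin n) ℂ,
        IsDelta T ∧ IsUnit T ∧
        A * (T * Jmat n * Tᴴ) + (T * Jmat n * Tᴴ) * Aᴴ + B * Jmat m * Bᴴ = 0 ∧
        B = -((T * Jmat n * Tᴴ) * Cᴴ * Jmat m)) := by
  have hΘ (T : Matrix (Fin n ⊕ Fin n) (Fin n ⊕ Fin n) ℂ) : (T * Jmat n * Tᴴ).IsHermitian :=
    isHermitian_mul_mul_conjTranspose T (Jmat_isHermitian n)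
  constructor
  · rintro ⟨T, M, N, hTd, hTu, -, hM, -, hAeq, hBeq, rfl⟩
    exact ⟨T, hTd, hTu,
      lyapunov_of_realization (hΘ T) hM (Jmat_isHermitian m) (Jmat_mul_Jmat m) hAeq hBeq, hBeq⟩
  · rintro ⟨T, hTd, hTu, hL, hB⟩
    have hJu : IsUnit (Jmat n) :=
      (isUnit_iff_isUnit_det _).mpr (isUnit_det_of_right_inverse (Jmat_mul_Jmat n))
    have hΘu : IsUnit (T * Jmat n * Tᴴ).det :=
      (isUnit_iff_isUnit_det _).mp ((hTu.mul hJu).mul hTu.star)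
    exact ⟨T, hamiltonian _ A C (Jmat m), C, hTd, hTu,
      isDelta_hamiltonian (deltaConj_mul_Jmat_mul_conjTranspose hTd) hΘu hA hC,
      isHermitian_hamiltonian (hΘ T) hΘu (Jmat_isHermitian m) (Jmat_mul_Jmat m) hL hB,
      hC, eq_realization_hamiltonian hΘu, hB, rfl⟩

theorem physically_realizable_iff
    (n m : ℕ) (hn : 0 < n) (hm : 0 < m)
    (A : Matrix (Fin n ⊕ Fin n) (Fin n ⊕ Fin n) ℂ)
    (B : Matrix (Fin n ⊕ Fin n) (Fin m ⊕ Fin m) ℂ)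
    (C : Matrix (Fin m ⊕ Fin m) (Fin n ⊕ Fin n) ℂ)
    (D : Matrix (Fin m ⊕ Fin m) (Fin m ⊕ Fin m) ℂ)
    (hA : IsDelta A) (hB : IsDelta B) (hC : IsDelta C) (hD : D = 1) :
    (∃ (T M : Matrix (Fin n ⊕ Fin n) (Fin n ⊕ Fin n) ℂ)
        (N : Matrix (Fin m ⊕ Fin m) (Fin n ⊕ Fin n) ℂ),
        IsDelta T ∧ IsUnit T ∧ IsDelta M ∧ M.IsHermitian ∧ IsDelta N ∧
        A = (-Complex.I) • ((T * Jmat n * Tᴴ) * M)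
            - (1 / 2 : ℂ) • ((T * Jmat n * Tᴴ) * Nᴴ * Jmat m * N) ∧
        B = -((T * Jmat n * Tᴴ) * Nᴴ * Jmat m) ∧
        C = N)
    ↔ (∃ T : Matrix (Fin n ⊕ Fin n) (Fin n ⊕ Fin n) ℂ,
        IsDelta T ∧ IsUnit T ∧
        A * (T * Jmat n * Tᴴ) + (T * Jmat n * Tᴴ) * Aᴴ + B * Jmat m * Bᴴ = 0 ∧
        B = -((T * Jmat n * Tᴴ) * Cᴴ * Jmat m)) :=
  physically_realizable_iff_general n m A B C hA hC
end

section
/- Let n, m be positive integers, let Θ be a Hermitian invertible 2n×2n complex matrix, A a 2n×2n complex matrix, and C a 2m×2n complex matrix, and suppose AΘ + ΘA† + ΘC†J_m CΘ = 0. Then the matrix M := iΘ^{-1}A + (i/2)C†J_m C is Hermitian, i.e., M† = M. -/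
/-!
Conjugating the constraint by `Θ⁻¹` turns it into `X + Xᴴ + Cᴴ J C = 0` for `X = Θ⁻¹ A`, using that
`Θ⁻¹` is Hermitian. Hence `Cᴴ J C = -(X + Xᴴ)` and `M = (i/2) (X - Xᴴ)`, which is `i` times a
skew-Hermitian matrix.
-/

open Matrix

namespace Matrix

variable {ι α : Type*} [Fintype ι] [DecidableEq ι] [CommRing α]

theorem inv_mul_add_mul_inv_add_eq_zero {Θ A B Q : Matrix ι ι α} (hΘ : IsUnit Θ)
    (h : A * Θ + Θ * B + Θ * Q * Θ = 0) : Θ⁻¹ * A + B * Θ⁻¹ + Q = 0 := by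
  have hdet : IsUnit Θ.det := (isUnit_iff_isUnit_det Θ).mp hΘ
  calc Θ⁻¹ * A + B * Θ⁻¹ + Q
      = Θ⁻¹ * (A * Θ + Θ * B + Θ * Q * Θ) * Θ⁻¹ := by
        simp only [Matrix.mul_add, Matrix.add_mul, ← Matrix.mul_assoc,
          nonsing_inv_mul _ hdet, Matrix.one_mul, mul_nonsing_inv_cancel_right _ _ hdet]
    _ = 0 := by rw [h, Matrix.mul_zero, Matrix.zero_mul]

end Matrix

theorem Matrix.isHermitian_I_smul_add_half_I_smul {ι : Type*} {X Q : Matrix ι ι ℂ}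
    (h : X + Xᴴ + Q = 0) : (Complex.I • X + (Complex.I / 2) • Q).IsHermitian := by
  obtain rfl : Q = -(X + Xᴴ) := eq_neg_of_add_eq_zero_right h
  have hI : star Complex.I = -Complex.I := Complex.conj_I
  simp only [IsHermitian, conjTranspose_add, conjTranspose_smul, conjTranspose_neg,
    conjTranspose_conjTranspose, star_div₀, hI, star_ofNat]
  module

theorem hamiltonian_isHermitian_of_realizability_general
    (n m : ℕ)
    (Θ A : Matrix (Fin n ⊕ Fin n) (Fin n ⊕ Fin n) ℂ)
    (C : Matrix (Fin m ⊕ Fin m) (Fin n ⊕ Fin n) ℂ)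
    (hΘ : Θ.IsHermitian) (hΘinv : IsUnit Θ)
    (h : A * Θ + Θ * Aᴴ + Θ * Cᴴ * Jmat m * C * Θ = 0) :
    (Complex.I • (Θ⁻¹ * A) + (Complex.I / 2) • (Cᴴ * Jmat m * C)).IsHermitian := by
  have hconj : Θ⁻¹ * A + (Θ⁻¹ * A)ᴴ + Cᴴ * Jmat m * C = 0 := by
    rw [conjTranspose_mul, hΘ.inv.eq]
    exact inv_mul_add_mul_inv_add_eq_zero hΘinv (by simpa only [Matrix.mul_assoc] using h)
  exact isHermitian_I_smul_add_half_I_smul hconj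

theorem hamiltonian_isHermitian_of_realizability
    (n m : ℕ) (hn : 0 < n) (hm : 0 < m)
    (Θ A : Matrix (Fin n ⊕ Fin n) (Fin n ⊕ Fin n) ℂ)
    (C : Matrix (Fin m ⊕ Fin m) (Fin n ⊕ Fin n) ℂ)
    (hΘ : Θ.IsHermitian) (hΘinv : IsUnit Θ)
    (h : A * Θ + Θ * Aᴴ + Θ * Cᴴ * Jmat m * C * Θ = 0) :
    (Complex.I • (Θ⁻¹ * A) + (Complex.I / 2) • (Cᴴ * Jmat m * C)).IsHermitian :=
  hamiltonian_isHermitian_of_realizability_general n m Θ A C hΘ hΘinv h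
end
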